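/- arXiv:0709.4565 — 2 statements merged into one kernel-verified Lean document; each statement's English description precedes it below -/
import Mathlib

section
/- (Kůrka's dichotomy) Every one-dimensional cellular automaton F : A^ℤ → A^ℤ either has an equicontinuous point or is sensitive to initial conditions. -/
open Classical in
/-- The Cantor-like distance on `ℤ → A`. -/
noncomputable def d1 {A : Type*} (x y : ℤ → A) : ℝ :=
  if x = y then 0
  else (2 : ℝ) ^ (-((sInf {n : ℕ | ∃ i : ℤ, x i ≠ y i ∧ i.natAbs = n} : ℕ) : ℤ))

/-- `x` is an equicontinuous point of `F` on `ℤ → A`. -/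
def IsEquicontinuousPt1 {A : Type*} (F : (ℤ → A) → (ℤ → A)) (x : ℤ → A) : Prop :=
  ∀ ε > (0:ℝ), ∃ δ > (0:ℝ), ∀ y : ℤ → A, d1 x y < δ →
    ∀ n : ℕ, d1 (F^[n] x) (F^[n] y) < ε

/-- `F` is sensitive to initial conditions on `ℤ → A`. -/
def IsSensitive1 {A : Type*} (F : (ℤ → A) → (ℤ → A)) : Prop :=
  ∃ ε > (0:ℝ), ∀ (x : ℤ → A), ∀ δ > (0:ℝ), ∃ (y : ℤ → A) (n : ℕ),
    d1 x y < δ ∧ d1 (F^[n] x) (F^[n] y) > ε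

/-- `F` is the radius-`r` cellular automaton with local rule `f`. -/
def IsRadiusCA1 {A : Type*} (r : ℕ) (f : (Fin (2 * r + 1) → A) → A)
    (F : (ℤ → A) → (ℤ → A)) : Prop :=
  ∀ (x : ℤ → A) (i : ℤ), F x i = f (fun j => x (i - (r : ℤ) + (j : ℤ)))

section KurkaAux

open Classical

variable {A : Type*}

private lemma d1_lt_iff (x y : ℤ → A) (k : ℕ) :
    d1 x y < (2:ℝ)^(-(k:ℤ)) ↔ ∀ i : ℤ, i.natAbs ≤ k → x i = y i := by
  classical
  unfold d1
  split_ifs with h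
  · constructor
    · intro _ i _; rw [h]
    · intro _; positivity
  · have hne : {n : ℕ | ∃ i : ℤ, x i ≠ y i ∧ i.natAbs = n}.Nonempty := by
      obtain ⟨i, hi⟩ := Function.ne_iff.mp h
      exact ⟨i.natAbs, i, hi, rfl⟩
    obtain ⟨i0, hi0, hi0a⟩ := Nat.sInf_mem hne
    constructor
    · intro hlt i hik
      have hk := (zpow_lt_zpow_iff_right₀ (by norm_num : (1:ℝ) < 2)).mp hlt
      by_contra hne'
      have := Nat.sInf_le (show i.natAbs ∈ {n : ℕ | ∃ i : ℤ, x i ≠ y i ∧ i.natAbs = n}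
        from ⟨i, hne', rfl⟩)
      omega
    · intro hag
      apply (zpow_lt_zpow_iff_right₀ (by norm_num : (1:ℝ) < 2)).mpr
      have : k < sInf {n : ℕ | ∃ i : ℤ, x i ≠ y i ∧ i.natAbs = n} := by
        by_contra hcon
        exact hi0 (hag i0 (by omega))
      omega

private lemma le_d1 (x y : ℤ → A) (k : ℕ) (i : ℤ) (hik : i.natAbs ≤ k)
    (hne : x i ≠ y i) : (2:ℝ)^(-(k:ℤ)) ≤ d1 x y := by
  classical
  unfold d1
  have hxy : ¬ x = y := fun h => hne (by rw [h])
  rw [if_neg hxy]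
  have h1 : sInf {n : ℕ | ∃ i : ℤ, x i ≠ y i ∧ i.natAbs = n} ≤ i.natAbs :=
    Nat.sInf_le ⟨i, hne, rfl⟩
  gcongr
  · norm_num
  · omega

private lemma two_zpow_eq (k : ℕ) : (2:ℝ)^(-(k:ℤ)) = (1/2:ℝ)^k := by
  rw [one_div, inv_pow, ← zpow_natCast, ← zpow_neg]

private lemma ca_shift {r : ℕ} {f : (Fin (2*r+1) → A) → A} {F : (ℤ → A) → (ℤ → A)}
    (hF : IsRadiusCA1 r f F) (c : ℤ) (y : ℤ → A) :
    F (fun i => y (i + c)) = fun i => F y (i + c) := by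
  funext i
  rw [hF, hF]
  congr 1
  funext j
  congr 1
  ring

private lemma ca_shift_iter {r : ℕ} {f : (Fin (2*r+1) → A) → A} {F : (ℤ → A) → (ℤ → A)}
    (hF : IsRadiusCA1 r f F) (c : ℤ) (y : ℤ → A) (n : ℕ) :
    F^[n] (fun i => y (i + c)) = fun i => F^[n] y (i + c) := by
  induction n with
  | zero => rfl
  | succ n ih =>
    rw [Function.iterate_succ_apply', ih, ca_shift hF c (F^[n] y)]
    funext i
    rw [Function.iterate_succ_apply']

private lemma cross_right {r p : ℕ} {f : (Fin (2*r+1) → A) → A} {F : (ℤ → A) → (ℤ → A)}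
    (hF : IsRadiusCA1 r f F) (x : ℤ → A) (hrp : r ≤ p)
    (hb : ∀ u : ℤ → A, (∀ j : ℤ, j.natAbs ≤ p → u j = x j) →
      ∀ n : ℕ, ∀ j : ℤ, j.natAbs ≤ r → F^[n] u j = F^[n] x j)
    (c : ℤ) (y z : ℤ → A)
    (hy : ∀ j : ℤ, j.natAbs ≤ p → y (j + c) = x j)
    (hz : ∀ j : ℤ, j.natAbs ≤ p → z (j + c) = x j)
    (hyz : ∀ i : ℤ, c - p ≤ i → y i = z i) :
    ∀ n : ℕ, ∀ i : ℤ, c - r ≤ i → F^[n] y i = F^[n] z i := by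
  have hbc : ∀ u : ℤ → A, (∀ j : ℤ, j.natAbs ≤ p → u (j + c) = x j) →
      ∀ n : ℕ, ∀ j : ℤ, j.natAbs ≤ r → F^[n] u (j + c) = F^[n] x j := by
    intro u hu n j hj
    have h := hb (fun i => u (i + c)) (fun j hj => hu j hj) n j hj
    rwa [ca_shift_iter hF] at h
  intro n
  induction n with
  | zero => intro i hi; exact hyz i (by omega)
  | succ n ih =>
    intro i hi
    rcases le_or_gt i (c + r) with h | h
    · have hj : (i - c).natAbs ≤ r := by omega
      have h1 := hbc y hy (n+1) (i - c) hj
      have h2 := hbc z hz (n+1) (i - c) hj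
      have hic : i - c + c = i := by ring
      rw [hic] at h1 h2
      exact h1.trans h2.symm
    · rw [Function.iterate_succ_apply', Function.iterate_succ_apply', hF, hF]
      congr 1
      funext j
      exact ih (i - r + j) (by omega)

private lemma cross_left {r p : ℕ} {f : (Fin (2*r+1) → A) → A} {F : (ℤ → A) → (ℤ → A)}
    (hF : IsRadiusCA1 r f F) (x : ℤ → A) (hrp : r ≤ p)
    (hb : ∀ u : ℤ → A, (∀ j : ℤ, j.natAbs ≤ p → u j = x j) →
      ∀ n : ℕ, ∀ j : ℤ, j.natAbs ≤ r → F^[n] u j = F^[n] x j)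
    (c : ℤ) (y z : ℤ → A)
    (hy : ∀ j : ℤ, j.natAbs ≤ p → y (j + c) = x j)
    (hz : ∀ j : ℤ, j.natAbs ≤ p → z (j + c) = x j)
    (hyz : ∀ i : ℤ, i ≤ c + p → y i = z i) :
    ∀ n : ℕ, ∀ i : ℤ, i ≤ c + r → F^[n] y i = F^[n] z i := by
  have hbc : ∀ u : ℤ → A, (∀ j : ℤ, j.natAbs ≤ p → u (j + c) = x j) →
      ∀ n : ℕ, ∀ j : ℤ, j.natAbs ≤ r → F^[n] u (j + c) = F^[n] x j := by
    intro u hu n j hj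
    have h := hb (fun i => u (i + c)) (fun j hj => hu j hj) n j hj
    rwa [ca_shift_iter hF] at h
  intro n
  induction n with
  | zero => intro i hi; exact hyz i (by omega)
  | succ n ih =>
    intro i hi
    rcases le_or_gt (c - r) i with h | h
    · have hj : (i - c).natAbs ≤ r := by omega
      have h1 := hbc y hy (n+1) (i - c) hj
      have h2 := hbc z hz (n+1) (i - c) hj
      have hic : i - c + c = i := by ring
      rw [hic] at h1 h2
      exact h1.trans h2.symm
    · rw [Function.iterate_succ_apply', Function.iterate_succ_apply', hF, hF]
      congr 1
      funext j
      have hjlt : (j : ℕ) < 2 * r + 1 := j.isLt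
      exact ih (i - r + j) (by omega)

end KurkaAux

/-- Kůrka's dichotomy for one-dimensional cellular automata. -/
theorem kurka_dichotomy
    (A : Type*) [Fintype A]
    (r : ℕ) (f : (Fin (2 * r + 1) → A) → A)
    (F : (ℤ → A) → (ℤ → A)) (hF : IsRadiusCA1 r f F) :
    (∃ x : ℤ → A, IsEquicontinuousPt1 F x) ∨ IsSensitive1 F := by
  classical
  by_cases hs : IsSensitive1 F
  · exact Or.inr hs
  left
  simp only [IsSensitive1] at hs
  push_neg at hs
  obtain ⟨x, δ, hδ, hx⟩ := hs ((2:ℝ)^(-((r:ℤ)+1))) (by positivity)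
  -- choose p ≥ r with 2^{-p} < δ
  obtain ⟨p0, hp0⟩ := exists_pow_lt_of_lt_one hδ (by norm_num : (1/2:ℝ) < 1)
  set p : ℕ := max p0 r with hpdef
  have hrp : r ≤ p := le_max_right _ _
  have hpδ : (2:ℝ)^(-(p:ℤ)) < δ := by
    calc (2:ℝ)^(-(p:ℤ)) ≤ (2:ℝ)^(-(p0:ℤ)) := by
          gcongr
          · norm_num
          · have : p0 ≤ p := le_max_left _ _
            omega
      _ = (1/2:ℝ)^p0 := two_zpow_eq p0
      _ < δ := hp0
  -- the blocking property of x
  have hblock : ∀ u : ℤ → A, (∀ j : ℤ, j.natAbs ≤ p → u j = x j) →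
      ∀ n : ℕ, ∀ j : ℤ, j.natAbs ≤ r → F^[n] u j = F^[n] x j := by
    intro u hu n j hj
    have hd : d1 x u < δ := by
      refine lt_of_lt_of_le ?_ hpδ.le
      exact (d1_lt_iff x u p).mpr (fun i hi => (hu i hi).symm)
    have h2 := hx u n hd
    by_contra hne
    have h3 := le_d1 (F^[n] x) (F^[n] u) r j hj (fun h => hne h.symm)
    have h4 : (2:ℝ)^(-((r:ℤ)+1)) < (2:ℝ)^(-(r:ℤ)) := by
      gcongr
      · norm_num
      · omega
    linarith
  -- the periodic configuration
  set L : ℤ := 2 * (p:ℤ) + 1 with hL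
  have hLpos : 0 < L := by omega
  set xs : ℤ → A := fun i => x ((i + p) % L - p) with hxs
  have hword : ∀ k : ℤ, ∀ j : ℤ, j.natAbs ≤ p → xs (j + k * L) = x j := by
    intro k j hj
    have h1 : (j + k * L + p) % L = j + p := by
      rw [show j + k * L + (p:ℤ) = (j + p) + k * L by ring, Int.add_mul_emod_self_right]
      exact Int.emod_eq_of_lt (by omega) (by omega)
    simp only [hxs]
    rw [h1]
    congr 1
    ring
  refine ⟨xs, ?_⟩
  intro ε hε
  obtain ⟨m0, hm0⟩ := exists_pow_lt_of_lt_one hε (by norm_num : (1/2:ℝ) < 1)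
  have hm : (2:ℝ)^(-(m0:ℤ)) < ε := by rw [two_zpow_eq]; exact hm0
  set c : ℤ := ((m0:ℤ) + 1) * L with hc
  have hcL : L ≤ c := by nlinarith [hLpos]
  have hcm : (m0:ℤ) < c := by nlinarith [hLpos]
  set q : ℕ := (c + p).toNat with hqdef
  have hq : (q:ℤ) = c + (p:ℤ) := Int.toNat_of_nonneg (by omega)
  refine ⟨(2:ℝ)^(-(q:ℤ)), by positivity, ?_⟩
  intro y hy n
  have hagree : ∀ i : ℤ, i.natAbs ≤ q → xs i = y i := (d1_lt_iff xs y q).mp hy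
  set z : ℤ → A := fun i => if -c - p ≤ i then xs i else y i with hz
  -- right crossing at center -c : xs vs z
  have hxsw : ∀ j : ℤ, j.natAbs ≤ p → xs (j + (-c)) = x j := by
    intro j hj
    have : j + (-c) = j + (-((m0:ℤ)+1)) * L := by rw [hc]; ring
    rw [this]
    exact hword _ j hj
  have hzw : ∀ j : ℤ, j.natAbs ≤ p → z (j + (-c)) = x j := by
    intro j hj
    have h1 : z (j + (-c)) = xs (j + (-c)) := by
      simp only [hz]
      rw [if_pos (by omega)]
    rw [h1]; exact hxsw j hj
  have hRz : ∀ n : ℕ, ∀ i : ℤ, -c - r ≤ i → F^[n] xs i = F^[n] z i := by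
    refine cross_right hF x hrp hblock (-c) xs z hxsw hzw ?_
    intro i hi
    simp only [hz]
    rw [if_pos (by omega)]
  -- left crossing at center c : z vs y
  have hxsw' : ∀ j : ℤ, j.natAbs ≤ p → xs (j + c) = x j := by
    intro j hj
    have : j + c = j + ((m0:ℤ)+1) * L := by rw [hc]
    rw [this]
    exact hword _ j hj
  have hzw' : ∀ j : ℤ, j.natAbs ≤ p → z (j + c) = x j := by
    intro j hj
    have h1 : z (j + c) = xs (j + c) := by
      simp only [hz]
      rw [if_pos (by omega)]
    rw [h1]; exact hxsw' j hj
  have hyw' : ∀ j : ℤ, j.natAbs ≤ p → y (j + c) = x j := by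
    intro j hj
    have h1 : xs (j + c) = y (j + c) := hagree _ (by omega)
    rw [← h1]; exact hxsw' j hj
  have hLz : ∀ n : ℕ, ∀ i : ℤ, i ≤ c + r → F^[n] z i = F^[n] y i := by
    refine cross_left hF x hrp hblock c z y hzw' hyw' ?_
    intro i hi
    simp only [hz]
    by_cases hcase : -c - p ≤ i
    · rw [if_pos hcase]
      exact hagree i (by omega)
    · rw [if_neg hcase]
  -- combine
  refine lt_trans ?_ hm
  rw [d1_lt_iff]
  intro i hi
  have e1 : F^[n] xs i = F^[n] z i := hRz n i (by omega)
  have e2 : F^[n] z i = F^[n] y i := hLz n i (by omega)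
  exact e1.trans e2
end

section
/- For a 1D cellular automaton F, if there exists a finite word u such that the spatially periodic configuration ∞u∞ is an equicontinuous point, then F has equicontinuous points; conversely (Kůrka), if F has an equicontinuous point then some finite word u yields an equicontinuous point of the form ∞u∞. -/
lemma d1_lt_two_pow {A : Type*} (x y : ℤ → A) (m : ℕ) :
    d1 x y < 2 ^ (-(m:ℤ)) ↔ ∀ i : ℤ, i.natAbs ≤ m → x i = y i := by
  unfold d1
  split_ifs with h
  · subst h
    constructor
    · intro _ i _; rfl
    · intro _; positivity
  · constructor
    · intro hlt i him
      by_contra hxy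
      have h1 : sInf {n : ℕ | ∃ j : ℤ, x j ≠ y j ∧ j.natAbs = n} ≤ i.natAbs :=
        Nat.sInf_le ⟨i, hxy, rfl⟩
      have h2 : -((sInf {n : ℕ | ∃ j : ℤ, x j ≠ y j ∧ j.natAbs = n} : ℕ) : ℤ) < -(m:ℤ) :=
        (zpow_lt_zpow_iff_right₀ (by norm_num : (1:ℝ) < 2)).mp hlt
      omega
    · intro hag
      have hne : {n : ℕ | ∃ j : ℤ, x j ≠ y j ∧ j.natAbs = n}.Nonempty := by
        rcases Function.ne_iff.mp h with ⟨i, hi⟩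
        exact ⟨i.natAbs, i, hi, rfl⟩
      obtain ⟨i, hi, hiabs⟩ := Nat.sInf_mem hne
      have hlt : m < sInf {n : ℕ | ∃ j : ℤ, x j ≠ y j ∧ j.natAbs = n} := by
        by_contra hle
        push_neg at hle
        exact hi (hag i (by omega))
      have h3 : -((sInf {n : ℕ | ∃ j : ℤ, x j ≠ y j ∧ j.natAbs = n} : ℕ) : ℤ) < -(m:ℤ) := by
        omega
      exact (zpow_lt_zpow_iff_right₀ (by norm_num : (1:ℝ) < 2)).mpr h3

/-- Iterates of a radius-`r` CA are local. -/
lemma iter_local1 {A : Type*} {r : ℕ} {f : (Fin (2 * r + 1) → A) → A}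
    {F : (ℤ → A) → (ℤ → A)} (hF : IsRadiusCA1 r f F) :
    ∀ (n : ℕ) (x y : ℤ → A) (a b : ℤ),
      (∀ i : ℤ, a - r * n ≤ i → i ≤ b + r * n → x i = y i) →
      ∀ i : ℤ, a ≤ i → i ≤ b → F^[n] x i = F^[n] y i := by
  intro n
  induction n with
  | zero =>
    intro x y a b h i h1 h2
    simpa using h i (by simpa using h1) (by simpa using h2)
  | succ n ih =>
    intro x y a b h i h1 h2
    rw [Function.iterate_succ_apply', Function.iterate_succ_apply', hF, hF]
    congr 1
    funext j
    have hj0 : (0:ℤ) ≤ (j : ℤ) := by positivity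
    have hj1 : ((j : ℕ) : ℤ) < 2 * r + 1 := by exact_mod_cast j.isLt
    refine ih x y (a - r) (b + r)
      (fun i' hi1 hi2 => h i' (by push_cast at hi1 ⊢; linarith) (by push_cast at hi2 ⊢; linarith))
      (i - r + j) (by omega) (by omega)

/-- Iterates of a CA commute with translations. -/
lemma iter_shift1 {A : Type*} {r : ℕ} {f : (Fin (2 * r + 1) → A) → A}
    {F : (ℤ → A) → (ℤ → A)} (hF : IsRadiusCA1 r f F) (t : ℤ) :
    ∀ (n : ℕ) (x : ℤ → A) (i : ℤ), F^[n] (fun j => x (j + t)) i = F^[n] x (i + t) := by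
  intro n
  induction n with
  | zero => intro x i; rfl
  | succ n ih =>
    intro x i
    rw [Function.iterate_succ_apply', Function.iterate_succ_apply', hF, hF]
    congr 1
    funext j
    rw [ih, show i - (r:ℤ) + j + t = i + t - r + j by ring]

/-- Blocking-word characterisation: a 1D CA has an equicontinuous point iff it
has a spatially periodic equicontinuous point `∞u∞`. -/
theorem equicontinuous_point_iff_periodic_blocking_word
    (A : Type*) [Fintype A]
    (r : ℕ) (f : (Fin (2 * r + 1) → A) → A)
    (F : (ℤ → A) → (ℤ → A)) (hF : IsRadiusCA1 r f F) :
    (∃ (k : ℕ) (_ : 0 < k) (x : ℤ → A),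
        (∀ i : ℤ, x (i + (k : ℤ)) = x i) ∧ IsEquicontinuousPt1 F x) ↔
    (∃ x : ℤ → A, IsEquicontinuousPt1 F x) := by
  constructor
  · rintro ⟨k, hk, x, hper, hx⟩
    exact ⟨x, hx⟩
  · rintro ⟨x, hx⟩
    obtain ⟨δ, hδ, H⟩ := hx ((2:ℝ) ^ (-(r:ℤ))) (by positivity)
    obtain ⟨s, hs⟩ : ∃ s : ℕ, (2:ℝ) ^ (-(s:ℤ)) < δ := by
      obtain ⟨s, hs⟩ := exists_pow_lt_of_lt_one hδ (by norm_num : (1:ℝ)/2 < 1)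
      refine ⟨s, ?_⟩
      rw [zpow_neg, zpow_natCast]
      simpa [one_div, inv_pow] using hs
    -- `x∣[-s,s]` is a blocking word
    have B : ∀ y : ℤ → A, (∀ i : ℤ, i.natAbs ≤ s → x i = y i) →
        ∀ (n : ℕ) (i : ℤ), i.natAbs ≤ r → F^[n] x i = F^[n] y i := by
      intro y hy n
      have hd : d1 x y < δ := lt_trans ((d1_lt_two_pow x y s).mpr hy) hs
      exact fun i hi => (d1_lt_two_pow _ _ r).mp (H y hd n) i hi
    -- shifted blocking property
    have B' : ∀ (p : ℤ) (y : ℤ → A),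
        (∀ j : ℤ, 0 ≤ j → j ≤ 2 * (s:ℤ) → x (-(s:ℤ) + j) = y (p + j)) →
        ∀ (n : ℕ) (i : ℤ), (i - (p + s)).natAbs ≤ r →
          F^[n] x (i - (p + (s:ℤ))) = F^[n] y i := by
      intro p y hy n i hi
      have h1 : ∀ i' : ℤ, i'.natAbs ≤ s → x i' = (fun j => y (j + (p + (s:ℤ)))) i' := by
        intro i' hi'
        have h := hy (i' + s) (by omega) (by omega)
        rw [show -(s:ℤ) + (i' + s) = i' by ring, show p + (i' + (s:ℤ)) = i' + (p + s) by ring] at h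
        exact h
      have h2 := B _ h1 n (i - (p + (s:ℤ))) (by omega)
      rw [h2, iter_shift1 hF, show i - (p + (s:ℤ)) + (p + (s:ℤ)) = i by ring]
    -- the periodic configuration
    set L : ℕ := 2 * s + 1 with hLdef
    have hL1 : (1:ℤ) ≤ (L:ℤ) := by omega
    set z : ℤ → A := fun i => x ((i + s) % (L:ℤ) - s) with hz
    have hzper : ∀ i : ℤ, z (i + (L:ℤ)) = z i := by
      intro i
      simp only [hz]
      congr 2
      rw [show i + (L:ℤ) + s = i + s + L * 1 by ring, Int.add_mul_emod_self_left]
    have hzw : ∀ (t : ℤ) (j : ℤ), 0 ≤ j → j ≤ 2 * (s:ℤ) →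
        x (-(s:ℤ) + j) = z (-(s:ℤ) + t * L + j) := by
      intro t j h0 h2
      simp only [hz]
      congr 1
      rw [show -(s:ℤ) + t * L + j + s = j + (L:ℤ) * t by ring, Int.add_mul_emod_self_left,
        Int.emod_eq_of_lt h0 (by omega)]
      ring
    refine ⟨L, by omega, z, hzper, ?_⟩
    -- z is equicontinuous
    intro ε hε
    obtain ⟨m, hm⟩ : ∃ m : ℕ, (2:ℝ) ^ (-(m:ℤ)) < ε := by
      obtain ⟨m, hm⟩ := exists_pow_lt_of_lt_one hε (by norm_num : (1:ℝ)/2 < 1)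
      refine ⟨m, ?_⟩
      rw [zpow_neg, zpow_natCast]
      simpa [one_div, inv_pow] using hm
    set M : ℤ := (m:ℤ) * (L:ℤ) with hM
    have hM0 : 0 ≤ M := by rw [hM]; positivity
    have hM1 : (m:ℤ) ≤ M := by
      rw [hM]
      exact le_mul_of_one_le_right (by positivity) hL1
    refine ⟨(2:ℝ) ^ (-((s + m * L + r : ℕ) : ℤ)), by positivity, ?_⟩
    intro y hy n
    rw [d1_lt_two_pow] at hy
    have hScast : ((s + m * L + r : ℕ) : ℤ) = (s:ℤ) + M + r := by
      rw [hM]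
      push_cast
      ring
    have hy' : ∀ i : ℤ, -((s:ℤ) + M + r) ≤ i → i ≤ (s:ℤ) + M + r → z i = y i := by
      intro i h1 h2
      exact hy i (by omega)
    have hcontPos : ∀ j : ℤ, 0 ≤ j → j ≤ 2 * (s:ℤ) →
        x (-(s:ℤ) + j) = z (-(s:ℤ) + M + j) := by
      intro j h0 h2
      have h := hzw (m:ℤ) j h0 h2
      rwa [← hM] at h
    have hcontNeg : ∀ j : ℤ, 0 ≤ j → j ≤ 2 * (s:ℤ) →
        x (-(s:ℤ) + j) = z (-(s:ℤ) + -M + j) := by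
      intro j h0 h2
      have h := hzw (-(m:ℤ)) j h0 h2
      rw [show -(m:ℤ) * L = -((m:ℤ) * L) by ring, ← hM] at h
      exact h
    -- column agreement at blocking positions
    have col : ∀ q : ℤ, -M ≤ q → q ≤ M →
        (∀ j : ℤ, 0 ≤ j → j ≤ 2 * (s:ℤ) → x (-(s:ℤ) + j) = z (-(s:ℤ) + q + j)) →
        ∀ (n : ℕ) (i : ℤ), (i - q).natAbs ≤ r → F^[n] z i = F^[n] y i := by
      intro q hq1 hq2 hq n i hi
      have h1 := B' (-(s:ℤ) + q) z hq n i (by omega)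
      have h2 := B' (-(s:ℤ) + q) y
        (fun j h0 hj2 => (hq j h0 hj2).trans (hy' _ (by omega) (by omega))) n i (by omega)
      exact h1.symm.trans h2
    -- main induction: agreement on the whole central strip
    have main : ∀ (n : ℕ) (i : ℤ), -M - r ≤ i → i ≤ M + r → F^[n] z i = F^[n] y i := by
      intro n
      induction n with
      | zero =>
        intro i h1 h2
        simpa using hy' i (by omega) (by omega)
      | succ n ih =>
        intro i h1 h2
        by_cases hc1 : (i - (-M)).natAbs ≤ r
        · exact col (-M) (by omega) (by omega) hcontNeg (n+1) i hc1
        · by_cases hc2 : (i - M).natAbs ≤ r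
          · exact col M (by omega) (by omega) hcontPos (n+1) i hc2
          · rw [Function.iterate_succ_apply', Function.iterate_succ_apply', hF, hF]
            congr 1
            funext j
            have hj0 : (0:ℤ) ≤ (j : ℤ) := by positivity
            have hj1 : ((j : ℕ) : ℤ) < 2 * r + 1 := by exact_mod_cast j.isLt
            exact ih (i - r + j) (by omega) (by omega)
    refine lt_trans ((d1_lt_two_pow _ _ m).mpr ?_) hm
    intro i hi
    exact main n i (by omega) (by omega)
end
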